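/- arXiv:1601.01660 — 5 statements merged into one kernel-verified Lean document; each statement's English description precedes it below -/
import Mathlib

section
/- Let $\mathcal{A}_\mathfrak{M}$ be the DFA derived from a model $\mathfrak{M}$ of the formula $\varphi_n^{\mathrm{DFA}} \wedge \varphi_n^W$, where $\varphi_n^W$ comprises the run-tracking constraints: $x_{\varepsilon, q_0}$; for all $u \in \mathit{Pref}(W)$ and distinct states $q \neq q'$, $\neg x_{u,q} \vee \neg x_{u,q'}$; and for all $ua \in \mathit{Pref}(W)$ and states $p, q$, $(x_{u,p} \wedge d_{p,a,q}) \to x_{ua,q}$. Then for every $u \in \mathit{Pref}(W)$ and state $q$, if the run of $\mathcal{A}_\mathfrak{M}$ from the initial state on $u$ ends in $q$, then $\mathfrak{M}(x_{u,q}) = \mathrm{true}$. -/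
/-- The set of prefixes of words in `W`. -/
def Pref {α : Type*} (W : Set (List α)) : Set (List α) := {u | ∃ v, u ++ v ∈ W}

/-- Run-tracking lemma: let `𝒜_𝔐` be the DFA (with states `Fin n`, initial
state `0`, transition function `δ` with `d p a q ↔ δ p a = q`, derived from a
model of `φₙᴰᶠᴬ`) and let the variables `x u q` satisfy the constraints of
`φₙᵂ`: `x ε q₀` holds; for every `u ∈ Pref W` at most one `x u q` holds; and
`(x u p ∧ d p a q) → x (u ++ [a]) q` for `u ++ [a] ∈ Pref W`.  Then for every
`u ∈ Pref W`, if the run of `𝒜_𝔐` on `u` from the initial state ends in `q`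
(i.e. `q = u.foldl δ q₀`), then `x u q` holds. -/
theorem stmt8 {α : Type*} {n : ℕ} (hn : 0 < n)
    (W : Set (List α)) (hW : W.Finite)
    (d : Fin n → α → Fin n → Prop) (δ : Fin n → α → Fin n)
    (x : List α → Fin n → Prop)
    (hd : ∀ p a q, d p a q ↔ δ p a = q)
    (hx0 : x [] ⟨0, hn⟩)
    (hxuniq : ∀ u ∈ Pref W, ∀ q q' : Fin n, q ≠ q' → ¬x u q ∨ ¬x u q')
    (hxstep : ∀ (u : List α) (a : α), u ++ [a] ∈ Pref W →
      ∀ p q, x u p → d p a q → x (u ++ [a]) q) :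
    ∀ u ∈ Pref W, x u (u.foldl δ ⟨0, hn⟩) := by
  intro u
  induction u using List.reverseRecOn with
  | nil => intro _; simpa using hx0
  | append_singleton u a ih =>
    intro hu
    have hu' : u ∈ Pref W := by
      obtain ⟨v, hv⟩ := hu
      exact ⟨a :: v, by simpa using hv⟩
    have hxu := ih hu'
    have := hxstep u a hu (u.foldl δ ⟨0, hn⟩) ((u ++ [a]).foldl δ ⟨0, hn⟩) hxu
      ((hd _ _ _).2 (by simp))
    exact this
end

section
/- Let $\mathcal{S} = (\mathit{Pos}, \mathit{Neg}, \mathit{Ex}, \mathit{Uni})$ be a sample. If there exists a DFA $\mathcal{B}$ with $n$ states satisfying $\mathit{Pos} \subseteq L(\mathcal{B})$, then the propositional formula $\psi_n^{\mathit{Pos}} = \varphi_n^{\mathrm{DFA}} \wedge \varphi_n^W \wedge \varphi_n^{\mathit{Pos}}$ is satisfiable; conversely, every model of $\psi_n^{\mathit{Pos}}$ yields a DFA $\mathcal{A}_\mathfrak{M}$ with $n$ states satisfying $\mathit{Pos} \subseteq L(\mathcal{A}_\mathfrak{M})$. -/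
/-- `φₙᴰᶠᴬ`: the variables `d p a q` encode a total deterministic transition
function on the states `{0, …, n-1}`. -/
def PhiDFA {α : Type*} {n : ℕ} (d : Fin n → α → Fin n → Prop) : Prop :=
  (∀ (p : Fin n) (a : α) (q q' : Fin n), d p a q → d p a q' → q = q') ∧
    ∀ (p : Fin n) (a : α), ∃ q, d p a q

/-- `φₙᵂ`: the variables `x u q` track the run of the encoded DFA on every
prefix of the finite word set `W`. -/
def PhiW {α : Type*} {n : ℕ} (q0 : Fin n) (W : Set (List α))
    (d : Fin n → α → Fin n → Prop) (x : List α → Fin n → Prop) : Prop :=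
  x [] q0 ∧ (∀ u ∈ Pref W, ∀ q q' : Fin n, x u q → x u q' → q = q') ∧
    ∀ (u : List α) (a : α), u ++ [a] ∈ Pref W →
      ∀ p q, x u p → d p a q → x (u ++ [a]) q

/-- `φₙᴾᵒˢ`: every positive word leads to a final state. -/
def PhiPos {α : Type*} {n : ℕ} (Pos : Set (List α))
    (x : List α → Fin n → Prop) (f : Fin n → Prop) : Prop :=
  ∀ u ∈ Pos, ∀ q, x u q → f q

/-- The language of the DFA with transition function `δ`, initial state `q0`
and final states `F`. -/
def DFALang {Q α : Type*} (δ : Q → α → Q) (q0 : Q) (F : Set Q) : Set (List α) :=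
  {w | w.foldl δ q0 ∈ F}

/-!
The canonical model of `ψₙᴾᵒˢ` for a DFA `δ` on `Fin n` sets `d p a q :↔ δ p a = q`,
`x u q :↔ δ*(q₀, u) = q` and `f q :↔ q ∈ F`; a DFA with any `n`-element state set is first
relabelled onto `Fin n` so that its initial state becomes `0`. Conversely, in any model the
propagation clause of `φₙᵂ` forces `x u (δ*(q₀, u))` along every prefix `u` of `W` by
induction on `u`, so `φₙᴾᵒˢ` makes every positive word end in a final state.
-/

section Pref

variable {α : Type*} {W : Set (List α)}

theorem mem_pref_of_mem {u : List α} (hu : u ∈ W) : u ∈ Pref W :=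
  ⟨[], by simpa using hu⟩

theorem mem_pref_of_append_mem {u v : List α} (h : u ++ v ∈ Pref W) : u ∈ Pref W := by
  obtain ⟨w, hw⟩ := h
  exact ⟨v ++ w, by simpa using hw⟩

end Pref

section Relabel

variable {Q Q' α : Type*}

theorem foldl_equiv_conj (e : Q ≃ Q') (δ : Q → α → Q) (q : Q) (w : List α) :
    w.foldl (fun p a => e (δ (e.symm p) a)) (e q) = e (w.foldl δ q) := by
  induction w generalizing q with
  | nil => rfl
  | cons a w ih => simpa using ih (δ q a)

theorem dfaLang_equiv_conj (e : Q ≃ Q') (δ : Q → α → Q) (q0 : Q) (F : Set Q) :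
    DFALang (fun p a => e (δ (e.symm p) a)) (e q0) (e.symm ⁻¹' F) = DFALang δ q0 F := by
  ext w
  simp [DFALang, foldl_equiv_conj]

theorem exists_equiv_fin_apply_eq [Fintype Q] {n : ℕ} (hcard : Fintype.card Q = n)
    (q0 : Q) (i : Fin n) : ∃ e : Q ≃ Fin n, e q0 = i := by
  let e := Fintype.equivFinOfCardEq hcard
  exact ⟨e.trans (Equiv.swap (e q0) i), by simp⟩

end Relabel

section Encoding

variable {α : Type*} {n : ℕ}

theorem phiDFA_graph (δ : Fin n → α → Fin n) : PhiDFA fun p a q => δ p a = q :=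
  ⟨fun _ _ _ _ h h' => h.symm.trans h', fun p a => ⟨δ p a, rfl⟩⟩

theorem phiW_run (δ : Fin n → α → Fin n) (q0 : Fin n) (W : Set (List α)) :
    PhiW q0 W (fun p a q => δ p a = q) fun u q => u.foldl δ q0 = q := by
  refine ⟨rfl, fun _ _ _ _ h h' => h.symm.trans h', ?_⟩
  rintro u a - p q rfl rfl
  simp

theorem phiPos_run {δ : Fin n → α → Fin n} {q0 : Fin n} {F : Set (Fin n)}
    {Pos : Set (List α)} (hPos : Pos ⊆ DFALang δ q0 F) :
    PhiPos Pos (fun u q => u.foldl δ q0 = q) (· ∈ F) := by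
  rintro u hu q rfl
  exact hPos hu

theorem PhiW.run_of_mem_pref {q0 : Fin n} {W : Set (List α)} {d : Fin n → α → Fin n → Prop}
    {x : List α → Fin n → Prop} (hW : PhiW q0 W d x) {δ : Fin n → α → Fin n}
    (hδ : ∀ p a, d p a (δ p a)) {u : List α} (hu : u ∈ Pref W) : x u (u.foldl δ q0) := by
  induction u using List.reverseRecOn with
  | nil => exact hW.1
  | append_singleton v a ih =>
    simpa using hW.2.2 v a hu _ _ (ih (mem_pref_of_append_mem hu)) (hδ _ a)

theorem subset_dfaLang_of_phiW_of_phiPos {q0 : Fin n} {Pos W : Set (List α)}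
    (hPosW : Pos ⊆ W) {d : Fin n → α → Fin n → Prop} {f : Fin n → Prop}
    {x : List α → Fin n → Prop} (hW : PhiW q0 W d x) (hPos : PhiPos Pos x f)
    {δ : Fin n → α → Fin n} (hδ : ∀ p a, d p a (δ p a)) :
    Pos ⊆ DFALang δ q0 {q | f q} := fun u hu =>
  hPos u hu _ (hW.run_of_mem_pref hδ (mem_pref_of_mem (hPosW hu)))

end Encoding

theorem stmt9_general {α : Type*} {n : ℕ} (hn : 0 < n)
    (Pos W : Set (List α)) (hPosW : Pos ⊆ W) :
    ((∃ (Q : Type) (_ : Fintype Q), Fintype.card Q = n ∧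
        ∃ (δ : Q → α → Q) (q0 : Q) (Fq : Set Q), Pos ⊆ DFALang δ q0 Fq) →
      ∃ (d : Fin n → α → Fin n → Prop) (f : Fin n → Prop)
        (x : List α → Fin n → Prop),
        PhiDFA d ∧ PhiW ⟨0, hn⟩ W d x ∧ PhiPos Pos x f) ∧
    (∀ (d : Fin n → α → Fin n → Prop) (f : Fin n → Prop)
        (x : List α → Fin n → Prop),
      PhiDFA d → PhiW ⟨0, hn⟩ W d x → PhiPos Pos x f →
      ∀ δ : Fin n → α → Fin n, (∀ p a q, d p a q ↔ δ p a = q) →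
        Pos ⊆ DFALang δ ⟨0, hn⟩ {q | f q}) := by
  constructor
  · rintro ⟨Q, _, hcard, δ, q0, F, hPos⟩
    obtain ⟨e, he⟩ := exists_equiv_fin_apply_eq hcard q0 ⟨0, hn⟩
    rw [← dfaLang_equiv_conj e, he] at hPos
    exact ⟨_, _, _, phiDFA_graph _, phiW_run _ _ W, phiPos_run hPos⟩
  · intro d f x _ hW hPos δ hδ
    exact subset_dfaLang_of_phiW_of_phiPos hPosW hW hPos fun p a => (hδ p a _).2 rfl

/-- If some DFA `ℬ` with `n` states accepts all words of `Pos`, then the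
formula `ψₙᴾᵒˢ = φₙᴰᶠᴬ ∧ φₙᵂ ∧ φₙᴾᵒˢ` is satisfiable; conversely, every model
of `ψₙᴾᵒˢ` yields a DFA `𝒜_𝔐` with `n` states satisfying `Pos ⊆ L(𝒜_𝔐)`. -/
theorem stmt9 {α : Type*} {n : ℕ} (hn : 0 < n)
    (Pos W : Set (List α)) (hPosW : Pos ⊆ W)
    (hWfin : W.Finite) (hPosfin : Pos.Finite) :
    ((∃ (Q : Type) (_ : Fintype Q), Fintype.card Q = n ∧
        ∃ (δ : Q → α → Q) (q0 : Q) (Fq : Set Q), Pos ⊆ DFALang δ q0 Fq) →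
      ∃ (d : Fin n → α → Fin n → Prop) (f : Fin n → Prop)
        (x : List α → Fin n → Prop),
        PhiDFA d ∧ PhiW ⟨0, hn⟩ W d x ∧ PhiPos Pos x f) ∧
    (∀ (d : Fin n → α → Fin n → Prop) (f : Fin n → Prop)
        (x : List α → Fin n → Prop),
      PhiDFA d → PhiW ⟨0, hn⟩ W d x → PhiPos Pos x f →
      ∀ δ : Fin n → α → Fin n, (∀ p a q, d p a q ↔ δ p a = q) →
        Pos ⊆ DFALang δ ⟨0, hn⟩ {q | f q}) :=
  stmt9_general hn Pos W hPosW
end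

section
/- Let $\mathcal{S} = (\mathit{Pos}, \mathit{Neg}, \mathit{Ex}, \mathit{Uni})$ be a sample. If there exists a DFA $\mathcal{B}$ with $n$ states satisfying $\mathit{Neg} \cap L(\mathcal{B}) = \emptyset$, then the formula $\psi_n^{\mathit{Neg}} = \varphi_n^{\mathrm{DFA}} \wedge \varphi_n^W \wedge \varphi_n^{\mathit{Neg}}$ is satisfiable; conversely, every model of $\psi_n^{\mathit{Neg}}$ yields a DFA $\mathcal{A}_\mathfrak{M}$ with $n$ states satisfying $\mathit{Neg} \cap L(\mathcal{A}_\mathfrak{M}) = \emptyset$. -/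
/-- `φₙᴺᵉᵍ`: no negative word leads to a final state. -/
def PhiNeg {α : Type*} {n : ℕ} (Neg : Set (List α))
    (x : List α → Fin n → Prop) (f : Fin n → Prop) : Prop :=
  ∀ u ∈ Neg, ∀ q, x u q → ¬f q

/-- If some DFA `ℬ` with `n` states rejects all words of `Neg`, then the
formula `ψₙᴺᵉᵍ = φₙᴰᶠᴬ ∧ φₙᵂ ∧ φₙᴺᵉᵍ` is satisfiable; conversely, every model
of `ψₙᴺᵉᵍ` yields a DFA `𝒜_𝔐` with `n` states with `Neg ∩ L(𝒜_𝔐) = ∅`. -/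
theorem stmt10 {α : Type*} {n : ℕ} (hn : 0 < n)
    (Neg W : Set (List α)) (hNegW : Neg ⊆ W)
    (hWfin : W.Finite) (hNegfin : Neg.Finite) :
    ((∃ (Q : Type) (_ : Fintype Q), Fintype.card Q = n ∧
        ∃ (δ : Q → α → Q) (q0 : Q) (Fq : Set Q), Neg ∩ DFALang δ q0 Fq = ∅) →
      ∃ (d : Fin n → α → Fin n → Prop) (f : Fin n → Prop)
        (x : List α → Fin n → Prop),
        PhiDFA d ∧ PhiW ⟨0, hn⟩ W d x ∧ PhiNeg Neg x f) ∧
    (∀ (d : Fin n → α → Fin n → Prop) (f : Fin n → Prop)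
        (x : List α → Fin n → Prop),
      PhiDFA d → PhiW ⟨0, hn⟩ W d x → PhiNeg Neg x f →
      ∀ δ : Fin n → α → Fin n, (∀ p a q, d p a q ↔ δ p a = q) →
        Neg ∩ DFALang δ ⟨0, hn⟩ {q | f q} = ∅) := by

  constructor
  · rintro ⟨Q, hQ, hcard, δ, q0, Fq, hrej⟩
    have e0 : Q ≃ Fin n := hQ.equivFinOfCardEq hcard
    let e : Q ≃ Fin n := e0.trans (Equiv.swap (e0 q0) ⟨0, hn⟩)
    have he0 : e q0 = ⟨0, hn⟩ := by simp [e, Equiv.swap_apply_left]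
    let δ' : Fin n → α → Fin n := fun p a => e (δ (e.symm p) a)
    have hfold' : ∀ (w : List α) (s : Q), w.foldl δ' (e s) = e (w.foldl δ s) := by
      intro w
      induction w with
      | nil => intro s; rfl
      | cons a w ih =>
          intro s
          simp only [List.foldl_cons]
          rw [← ih (δ s a)]
          simp [δ']
    have hfold : ∀ w : List α, w.foldl δ' ⟨0, hn⟩ = e (w.foldl δ q0) := by
      intro w; rw [← he0]; exact hfold' w q0
    refine ⟨fun p a q => δ' p a = q, fun q => (e.symm q) ∈ Fq,
      fun u q => u.foldl δ' ⟨0, hn⟩ = q, ⟨?_, ?_⟩, ⟨rfl, ?_, ?_⟩, ?_⟩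
    · rintro p a q q' rfl rfl; rfl
    · exact fun p a => ⟨δ' p a, rfl⟩
    · rintro u _ q q' rfl rfl; rfl
    · rintro u a _ p q rfl rfl; simp [List.foldl_append]
    · rintro u hu q rfl hf
      have : u ∈ Neg ∩ DFALang δ q0 Fq := by
        refine ⟨hu, ?_⟩
        have := hfold u
        simpa [DFALang, this] using hf
      rw [hrej] at this
      exact this
  · intro d f x hDFA hW hNeg δ hδ
    have hrun : ∀ u ∈ Pref W, x u (u.foldl δ ⟨0, hn⟩) := by
      intro u hu
      induction u using List.reverseRecOn with
      | nil => exact hW.1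
      | append_singleton u a ih =>
          have hu' : u ∈ Pref W := by
            obtain ⟨v, hv⟩ := hu
            exact ⟨[a] ++ v, by simpa using hv⟩
          have hx := ih hu'
          have hd : d (u.foldl δ ⟨0, hn⟩) a ((u ++ [a]).foldl δ ⟨0, hn⟩) := by
            rw [hδ]; simp [List.foldl_append]
          exact hW.2.2 u a hu _ _ hx hd
    ext u
    simp only [Set.mem_inter_iff, Set.mem_empty_iff_false, iff_false, not_and]
    intro hu hmem
    have hp : u ∈ Pref W := ⟨[], by simpa using hNegW hu⟩
    exact hNeg u hu _ (hrun u hp) hmem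
end

section
/- Let $\iota = (u, \mathcal{A})$ be a universal implication with $\mathcal{A}$ an NFA, and let $\mathfrak{M}$ be a model of $\varphi_n^{\mathrm{DFA}} \wedge \varphi_n^W \wedge \varphi_n^\iota$ where $\varphi_n^\iota$ comprises: $y_{q_0, q_0^\mathcal{A}}$; for all DFA-states $p, q$ and NFA-transitions $(p', a, q')$, $(y_{p,p'} \wedge d_{p,a,q}) \to y_{q,q'}$; and the implication $(\bigvee_q x_{u,q} \wedge f_q) \to (\bigwedge_q \bigwedge_{q' \in F_\mathcal{A}} y_{q,q'} \to f_q)$. Then the derived DFA $\mathcal{A}_\mathfrak{M}$ satisfies: if $u \in L(\mathcal{A}_\mathfrak{M})$ then $L(\mathcal{A}) \subseteq L(\mathcal{A}_\mathfrak{M})$. -/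
/-- A run of an NFA. -/
def NRun {Q α : Type*} (Δ : Q → α → Q → Prop) : Q → List α → Q → Prop
  | p, [], q => p = q
  | p, a :: w, q => ∃ r, Δ p a r ∧ NRun Δ r w q

/-- The language of an NFA. -/
def NFALang {Q α : Type*} (Δ : Q → α → Q → Prop) (q0 : Q) (F : Set Q) :
    Set (List α) :=
  {w | ∃ q ∈ F, NRun Δ q0 w q}

/-- Soundness of the encoding for a universal implication `ι = (u, 𝒜)`:
if `𝔐` is a model of `φₙᴰᶠᴬ ∧ φₙᵂ ∧ φₙᶥ`, where `φₙᶥ` comprises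
`y q₀ q₀ᴬ`, the propagation `(y p p' ∧ d p a q) → y q q'` for NFA transitions
`(p', a, q')`, and `(⋁_q x u q ∧ f q) → (⋀_q ⋀_{q' ∈ F_𝒜} y q q' → f q)`,
then the derived DFA `𝒜_𝔐` satisfies: `u ∈ L(𝒜_𝔐)` implies
`L(𝒜) ⊆ L(𝒜_𝔐)`. -/
theorem stmt11 {α QA : Type*} [Fintype QA] {n : ℕ} (hn : 0 < n)
    (W : Set (List α)) (hWfin : W.Finite) (u : List α) (huW : u ∈ W)
    (ΔA : QA → α → QA → Prop) (q0A : QA) (FA : Set QA)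
    (d : Fin n → α → Fin n → Prop) (f : Fin n → Prop)
    (x : List α → Fin n → Prop) (y : Fin n → QA → Prop)
    (hdfa : PhiDFA d) (hw : PhiW ⟨0, hn⟩ W d x)
    (δ : Fin n → α → Fin n) (hδ : ∀ p a q, d p a q ↔ δ p a = q)
    (hy0 : y ⟨0, hn⟩ q0A)
    (hystep : ∀ (p q : Fin n) (p' : QA) (a : α) (q' : QA),
      ΔA p' a q' → y p p' → d p a q → y q q')
    (hmain : (∃ q, x u q ∧ f q) →
      ∀ (q : Fin n) (q' : QA), q' ∈ FA → y q q' → f q) :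
    u ∈ DFALang δ ⟨0, hn⟩ {q | f q} →
      NFALang ΔA q0A FA ⊆ DFALang δ ⟨0, hn⟩ {q | f q} := by
  intro hu w hw'
  obtain ⟨qf, hqf, hrun⟩ := hw'
  -- x holds along prefixes of u
  have hx : ∀ v, v ∈ Pref W → x v (v.foldl δ ⟨0, hn⟩) := by
    intro v
    induction v using List.reverseRecOn with
    | nil => intro _; exact hw.1
    | append_singleton v a ih =>
      intro hv
      have hvp : v ∈ Pref W := by
        obtain ⟨t, ht⟩ := hv
        exact ⟨[a] ++ t, by simpa using ht⟩
      have := hw.2.2 v a hv _ _ (ih hvp) ((hδ _ a _).mpr rfl)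
      simpa using this
  have hxu : x u (u.foldl δ ⟨0, hn⟩) := hx u ⟨[], by simpa using huW⟩
  have hex : ∃ q, x u q ∧ f q := ⟨_, hxu, hu⟩
  -- y holds along runs
  have hy : ∀ (w : List α) (p : Fin n) (p' q' : QA), NRun ΔA p' w q' → y p p' →
      y (w.foldl δ p) q' := by
    intro w
    induction w with
    | nil => intro p p' q' hr hy; cases hr; exact hy
    | cons a w ih =>
      intro p p' q' hr hy
      obtain ⟨r, har, hrr⟩ := hr
      exact ih (δ p a) r q' hrr (hystep p (δ p a) p' a r har hy ((hδ _ _ _).mpr rfl))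
  exact hmain hex _ qf hqf (hy w ⟨0, hn⟩ q0A qf hrun hy0)
end

section
/- Let $\iota = (u, \mathcal{A})$ be an existential implication and $\mathfrak{M}$ a model of the encoding $\varphi_n^{\mathrm{DFA}} \wedge \varphi_n^W \wedge \phi_n^\iota$, where $\phi_n^\iota$ uses variables $z_{q,q',\ell}$ ($\ell \leq k = n|Q_\mathcal{A}| - 1$) exactly characterizing pairs of states simultaneously reachable by words of length $\ell$ in the encoded DFA and in $\mathcal{A}$, together with the constraint that acceptance of $u$ by the encoded DFA implies the existence of $q$, $q' \in F_\mathcal{A}$, and $\ell \leq k$ with $z_{q,q',\ell}$ and $f_q$ both true. Then the derived DFA $\mathcal{A}_\mathfrak{M}$ satisfies: $u \in L(\mathcal{A}_\mathfrak{M})$ implies $L(\mathcal{A}_\mathfrak{M}) \cap L(\mathcal{A}) \neq \emptyset$. -/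

lemma nrun_snoc {Q α : Type*} (Δ : Q → α → Q → Prop) (p r q : Q) (w : List α) (a : α)
    (h1 : NRun Δ p w r) (h2 : Δ r a q) : NRun Δ p (w ++ [a]) q := by
  induction w generalizing p with
  | nil => cases h1; exact ⟨q, h2, rfl⟩
  | cons b w ih =>
    obtain ⟨s, hs, hrun⟩ := h1
    exact ⟨s, hs, ih s hrun⟩

/-- Soundness of the encoding for an existential implication `ι = (u, 𝒜)`:
let `𝔐` be a model of `φₙᴰᶠᴬ ∧ φₙᵂ ∧ φₙᶥ`, where `φₙᶥ` uses variables
`z q q' ℓ` (for `ℓ ≤ k = n⬝|Q_𝒜| - 1`) exactly characterising the pairs of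
states simultaneously reachable on words of length `ℓ` in the encoded DFA and
in `𝒜`, together with the constraint that acceptance of `u` by the encoded
DFA implies the existence of `q`, `q' ∈ F_𝒜` and `ℓ ≤ k` with `z q q' ℓ` and
`f q`.  Then the derived DFA `𝒜_𝔐` satisfies: `u ∈ L(𝒜_𝔐)` implies
`L(𝒜_𝔐) ∩ L(𝒜) ≠ ∅`. -/
theorem stmt13 {α QA : Type*} [Fintype QA] {n : ℕ} (hn : 0 < n)
    (W : Set (List α)) (hWfin : W.Finite) (u : List α) (huW : u ∈ W)
    (ΔA : QA → α → QA → Prop) (q0A : QA) (FA : Set QA)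
    (d : Fin n → α → Fin n → Prop) (f : Fin n → Prop)
    (x : List α → Fin n → Prop) (z : Fin n → QA → ℕ → Prop)
    (hdfa : PhiDFA d) (hw : PhiW ⟨0, hn⟩ W d x)
    (δ : Fin n → α → Fin n) (hδ : ∀ p a q, d p a q ↔ δ p a = q)
    (hz0 : z ⟨0, hn⟩ q0A 0)
    (hz0' : ∀ (q : Fin n) (q' : QA), ¬(q = ⟨0, hn⟩ ∧ q' = q0A) → ¬z q q' 0)
    (hzstep : ∀ (p q : Fin n) (p' : QA) (a : α) (q' : QA) (ℓ : ℕ),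
      ℓ < n * Fintype.card QA - 1 → z p p' ℓ → d p a q → ΔA p' a q' →
      z q q' (ℓ + 1))
    (hzback : ∀ (q : Fin n) (q' : QA) (ℓ : ℕ),
      1 ≤ ℓ → ℓ ≤ n * Fintype.card QA - 1 → z q q' ℓ →
      ∃ (p : Fin n) (p' : QA) (a : α),
        d p a q ∧ ΔA p' a q' ∧ z p p' (ℓ - 1))
    (hmain : (∃ q, x u q ∧ f q) →
      ∃ (q : Fin n) (q' : QA) (ℓ : ℕ),
        q' ∈ FA ∧ ℓ ≤ n * Fintype.card QA - 1 ∧ z q q' ℓ ∧ f q) :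
    u ∈ DFALang δ ⟨0, hn⟩ {q | f q} →
      ∃ w, w ∈ DFALang δ ⟨0, hn⟩ {q | f q} ∧ w ∈ NFALang ΔA q0A FA := by
  intro hu
  -- x tracks the run
  have hx : ∀ v : List α, v ∈ Pref W → x v (v.foldl δ ⟨0, hn⟩) := by
    intro v
    induction v using List.reverseRecOn with
    | nil => intro _; exact hw.1
    | append_singleton v a ih =>
      intro hpref
      have hv : v ∈ Pref W := by
        obtain ⟨s, hs⟩ := hpref
        exact ⟨[a] ++ s, by simpa using hs⟩
      have := hw.2.2 v a hpref (v.foldl δ ⟨0, hn⟩) ((v ++ [a]).foldl δ ⟨0, hn⟩)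
        (ih hv) (by rw [hδ]; simp)
      exact this
  have hxu : x u (u.foldl δ ⟨0, hn⟩) := hx u ⟨[], by simpa using huW⟩
  obtain ⟨q, q', ℓ, hqF, hℓ, hz, hf⟩ := hmain ⟨_, hxu, hu⟩
  -- z gives a common word
  have key : ∀ ℓ, ℓ ≤ n * Fintype.card QA - 1 → ∀ q q', z q q' ℓ →
      ∃ w : List α, w.foldl δ ⟨0, hn⟩ = q ∧ NRun ΔA q0A w q' := by
    intro ℓ
    induction ℓ with
    | zero =>
      intro _ q q' hz
      by_contra h
      rcases Classical.em (q = ⟨0, hn⟩ ∧ q' = q0A) with ⟨rfl, rfl⟩ | hne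
      · exact h ⟨[], rfl, rfl⟩
      · exact hz0' q q' hne hz
    | succ ℓ ih =>
      intro hle q q' hz
      obtain ⟨p, p', a, hd, hΔ, hzp⟩ := hzback q q' (ℓ + 1) (Nat.succ_le_succ (Nat.zero_le _)) hle hz
      obtain ⟨w, hw1, hw2⟩ := ih (le_trans (Nat.le_succ _) hle) p p' (by simpa using hzp)
      refine ⟨w ++ [a], ?_, nrun_snoc ΔA _ _ _ _ _ hw2 hΔ⟩
      rw [List.foldl_append, hw1]
      simpa using (hδ p a q).1 hd
  obtain ⟨w, hw1, hw2⟩ := key ℓ hℓ q q' hz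
  exact ⟨w, by simpa [DFALang, hw1] using hf, ⟨q', hqF, hw2⟩⟩
end
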